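/- Let L be an N×N real symmetric matrix whose eigenvalues are all contained in {0} ∪ [λ₁, λ_max] with 0 < λ₁ ≤ λ_max, let s be a nonzero vector in ℝ^N, let V_M be an N×M real matrix with orthonormal columns whose columns span K_M(L,s) = span{s, Ls, …, L^{M−1}s} and whose first column is s/‖s‖₂, and set H_M = V_Mᵀ L V_M. Assume additionally that all eigenvalues of H_M lie in {0} ∪ [λ₁, λ_max]. Then for every continuous g : [0, λ_max] → ℝ, ‖g(L)s − ‖s‖₂ · V_M g(H_M) e₁‖₂ ≤ 2‖s‖₂ · min over all polynomials p of degree at most M−1 satisfying p(0) = g(0) of max over z ∈ [λ₁, λ_max] of |g(z) − p(z)|. -/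

import Mathlib

open Matrix Polynomial

/-- The Euclidean norm of a vector in `Fin n → ℝ`. -/
noncomputable def euclNorm {n : ℕ} (x : Fin n → ℝ) : ℝ := Real.sqrt (∑ i, x i ^ 2)

lemma euclNorm_eq_norm {n : ℕ} (x : Fin n → ℝ) :
    euclNorm x = ‖(WithLp.equiv 2 (Fin n → ℝ)).symm x‖ := by
  rw [EuclideanSpace.norm_eq]
  simp [euclNorm, Real.norm_eq_abs, sq_abs]

lemma euclNorm_nonneg {n : ℕ} (x : Fin n → ℝ) : 0 ≤ euclNorm x :=
  Real.sqrt_nonneg _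

lemma euclNorm_sub_le {n : ℕ} (x y : Fin n → ℝ) :
    euclNorm (x - y) ≤ euclNorm x + euclNorm y := by
  rw [euclNorm_eq_norm, euclNorm_eq_norm, euclNorm_eq_norm]
  exact norm_sub_le _ _

lemma euclNorm_smul {n : ℕ} (c : ℝ) (x : Fin n → ℝ) :
    euclNorm (c • x) = |c| * euclNorm x := by
  rw [euclNorm_eq_norm, euclNorm_eq_norm]
  have h : (WithLp.equiv 2 (Fin n → ℝ)).symm (c • x)
      = c • (WithLp.equiv 2 (Fin n → ℝ)).symm x := rfl
  rw [h, norm_smul, Real.norm_eq_abs]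

lemma euclNorm_pos {n : ℕ} {x : Fin n → ℝ} (hx : x ≠ 0) : 0 < euclNorm x := by
  rw [euclNorm_eq_norm]
  exact norm_pos_iff.mpr (fun h => hx (by simpa using congrArg (WithLp.equiv 2 (Fin n → ℝ)) h))

lemma euclNorm_sq {n : ℕ} (x : Fin n → ℝ) : euclNorm x ^ 2 = ∑ i, x i ^ 2 := by
  rw [euclNorm, Real.sq_sqrt (Finset.sum_nonneg fun i _ => sq_nonneg _)]

lemma euclNorm_mulVec {n m : ℕ} (V : Matrix (Fin n) (Fin m) ℝ) (h : Vᵀ * V = 1)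
    (x : Fin m → ℝ) : euclNorm (V *ᵥ x) = euclNorm x := by
  have key : ∑ i, (V *ᵥ x) i ^ 2 = ∑ i, x i ^ 2 := by
    have h1 : (V *ᵥ x) ⬝ᵥ (V *ᵥ x) = x ⬝ᵥ x := by
      rw [dotProduct_mulVec, ← mulVec_transpose, mulVec_mulVec, h, one_mulVec]
    have e1 : ∀ y : Fin n → ℝ, y ⬝ᵥ y = ∑ i, y i ^ 2 := by
      intro y; simp [dotProduct, sq]
    have e2 : (x : Fin m → ℝ) ⬝ᵥ x = ∑ i, x i ^ 2 := by
      simp [dotProduct, sq]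
    rw [← e1, ← e2, h1]
  rw [euclNorm, euclNorm, key]

lemma euclNorm_diagonal_le {n : ℕ} {c : Fin n → ℝ} {e : ℝ} (he : 0 ≤ e)
    (hc : ∀ i, |c i| ≤ e) (x : Fin n → ℝ) :
    euclNorm (Matrix.diagonal c *ᵥ x) ≤ e * euclNorm x := by
  rw [euclNorm, euclNorm, ← Real.sqrt_sq he, ← Real.sqrt_mul (sq_nonneg e)]
  apply Real.sqrt_le_sqrt
  rw [Finset.mul_sum]
  apply Finset.sum_le_sum
  intro i _
  rw [mulVec_diagonal, mul_pow]
  apply mul_le_mul_of_nonneg_right _ (sq_nonneg _)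
  rw [← sq_abs (c i)]
  exact pow_le_pow_left₀ (abs_nonneg _) (hc i) 2

lemma spectral_aeval {n : ℕ} (U : Matrix (Fin n) (Fin n) ℝ) (Λ : Fin n → ℝ)
    (hU : Uᵀ * U = 1) (p : Polynomial ℝ) :
    U * Matrix.diagonal (fun i => p.eval (Λ i)) * Uᵀ
      = Polynomial.aeval (U * Matrix.diagonal Λ * Uᵀ) p := by
  have hU' : U * Uᵀ = 1 := mul_eq_one_comm.mp hU
  have key : ∀ k : ℕ, (U * Matrix.diagonal Λ * Uᵀ) ^ k
      = U * Matrix.diagonal (fun i => Λ i ^ k) * Uᵀ := by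
    intro k
    induction k with
    | zero => simp [hU']
    | succ k ih =>
      rw [pow_succ, ih]
      have : (U * Matrix.diagonal (fun i => Λ i ^ k) * Uᵀ) * (U * Matrix.diagonal Λ * Uᵀ)
          = U * (Matrix.diagonal (fun i => Λ i ^ k) * Matrix.diagonal Λ) * Uᵀ := by
        simp only [Matrix.mul_assoc]
        rw [← Matrix.mul_assoc Uᵀ U, hU, Matrix.one_mul]
      rw [this, Matrix.diagonal_mul_diagonal]
      simp [pow_succ]
  induction p using Polynomial.induction_on' with
  | add p q hp hq =>
    rw [map_add, ← hp, ← hq]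
    simp only [Polynomial.eval_add]
    have : Matrix.diagonal (fun i => p.eval (Λ i) + q.eval (Λ i))
        = Matrix.diagonal (fun i => p.eval (Λ i)) + Matrix.diagonal (fun i => q.eval (Λ i)) := by
      rw [← Matrix.diagonal_add]
    rw [this, Matrix.mul_add, Matrix.add_mul]
  | monomial k a =>
    rw [Polynomial.aeval_monomial, key]
    simp only [Polynomial.eval_monomial]
    have : Matrix.diagonal (fun i => a * Λ i ^ k) = a • Matrix.diagonal (fun i => Λ i ^ k) := by
      rw [show (fun i => a * Λ i ^ k) = a • fun i => Λ i ^ k from rfl, Matrix.diagonal_smul]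
    rw [this]
    have halg : (algebraMap ℝ (Matrix (Fin n) (Fin n) ℝ)) a * (U * Matrix.diagonal (fun i => Λ i ^ k) * Uᵀ) = a • (U * Matrix.diagonal (fun i => Λ i ^ k) * Uᵀ) := by
      rw [Algebra.algebraMap_eq_smul_one, smul_mul_assoc, Matrix.one_mul]
    rw [halg, Matrix.mul_smul, Matrix.smul_mul]

lemma sum_mulVec' {n m : ℕ} {ι : Type*} (t : Finset ι) (A : ι → Matrix (Fin n) (Fin m) ℝ)
    (x : Fin m → ℝ) : (∑ i ∈ t, A i) *ᵥ x = ∑ i ∈ t, (A i *ᵥ x) := by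
  induction t using Finset.cons_induction with
  | empty => simp
  | cons a t ha ih => rw [Finset.sum_cons, Finset.sum_cons, Matrix.add_mulVec, ih]

lemma mulVec_sum' {n m : ℕ} {ι : Type*} (t : Finset ι) (A : Matrix (Fin n) (Fin m) ℝ)
    (v : ι → Fin m → ℝ) : A *ᵥ (∑ i ∈ t, v i) = ∑ i ∈ t, A *ᵥ v i := by
  induction t using Finset.cons_induction with
  | empty => simp
  | cons a t ha ih => rw [Finset.sum_cons, Finset.sum_cons, Matrix.mulVec_add, ih]

/-- The spectral-gap refinement of the Lanczos error bound: if all eigenvalues of `L`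
(and of `H_M`) lie in `{0} ∪ [λ₁, λ_max]` with `0 < λ₁ ≤ λ_max`, then
`‖g(L)s − ‖s‖₂ V_M g(H_M) e₁‖₂
  ≤ 2‖s‖₂ · min_{p ∈ P_{M−1}, p(0) = g(0)} max_{z ∈ [λ₁, λ_max]} |g(z) − p(z)|`. -/
theorem lanczos_error_bound_spectral_gap
    (N M : ℕ) (hM : 0 < M)
    (L : Matrix (Fin N) (Fin N) ℝ) (hL : L.IsSymm)
    (lam1 lammax : ℝ) (hlam1 : 0 < lam1) (hlam : lam1 ≤ lammax)
    -- a spectral decomposition of L, with all eigenvalues in {0} ∪ [λ₁, λ_max]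
    (U : Matrix (Fin N) (Fin N) ℝ) (Λ : Fin N → ℝ)
    (hU : Uᵀ * U = 1) (hLdec : L = U * Matrix.diagonal Λ * Uᵀ)
    (hΛ : ∀ i, Λ i ∈ ({0} ∪ Set.Icc lam1 lammax : Set ℝ))
    -- a nonzero vector s
    (s : Fin N → ℝ) (hs : s ≠ 0)
    -- a continuous function g : [0, λ_max] → ℝ
    (g : ℝ → ℝ) (hg : ContinuousOn g (Set.Icc 0 lammax))
    -- V_M has orthonormal columns spanning the Krylov subspace K_M(L, s),
    -- and its first column is s / ‖s‖₂
    (V : Matrix (Fin N) (Fin M) ℝ)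
    (hV : Vᵀ * V = 1)
    (hspan : Submodule.span ℝ (Set.range fun j : Fin M => Vᵀ j)
      = Submodule.span ℝ (Set.range fun k : Fin M => (L ^ (k : ℕ)) *ᵥ s))
    (hfirst : ∀ i, V i ⟨0, hM⟩ = s i / euclNorm s)
    -- a spectral decomposition of H_M = V_Mᵀ L V_M,
    -- with all eigenvalues of H_M in {0} ∪ [λ₁, λ_max]
    (W : Matrix (Fin M) (Fin M) ℝ) (μ : Fin M → ℝ)
    (hW : Wᵀ * W = 1) (hHdec : Vᵀ * L * V = W * Matrix.diagonal μ * Wᵀ)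
    (hμ : ∀ i, μ i ∈ ({0} ∪ Set.Icc lam1 lammax : Set ℝ)) :
    euclNorm ((U * Matrix.diagonal (fun i => g (Λ i)) * Uᵀ) *ᵥ s
        - euclNorm s • (V *ᵥ ((W * Matrix.diagonal (fun i => g (μ i)) * Wᵀ)
            *ᵥ fun j : Fin M => if j = ⟨0, hM⟩ then (1 : ℝ) else 0)))
      ≤ 2 * euclNorm s *
        sInf { e : ℝ | ∃ p : Polynomial ℝ, p.natDegree ≤ M - 1 ∧ p.eval 0 = g 0 ∧
          e = sSup ((fun z => |g z - p.eval z|) '' Set.Icc lam1 lammax) } := by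
  set n1 : Fin M := ⟨0, hM⟩ with hn1
  set ns := euclNorm s with hns_def
  have hns : 0 < ns := euclNorm_pos hs
  set e1 : Fin M → ℝ := fun j => if j = n1 then 1 else 0 with he1_def
  have he1single : e1 = Pi.single n1 1 := by
    funext j; simp [he1_def, Pi.single_apply]
  set H := Vᵀ * L * V with hHdef
  -- V Vᵀ acts as identity on the span of the columns of V
  have hVVt : ∀ x ∈ Submodule.span ℝ (Set.range fun j : Fin M => Vᵀ j),
      (V * Vᵀ) *ᵥ x = x := by
    intro x hx
    have hsub : Submodule.span ℝ (Set.range fun j : Fin M => Vᵀ j)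
        ≤ LinearMap.range (Matrix.mulVecLin V) := by
      rw [Submodule.span_le]
      rintro _ ⟨j, rfl⟩
      refine ⟨Pi.single j 1, ?_⟩
      rw [Matrix.mulVecLin_apply, Matrix.mulVec_single_one]; rfl
    obtain ⟨u, hu⟩ := hsub hx
    have key : (V * Vᵀ) *ᵥ (V *ᵥ u) = V *ᵥ u := by
      rw [Matrix.mulVec_mulVec, Matrix.mul_assoc, hV, Matrix.mul_one]
    rw [← hu]
    simpa [Matrix.mulVecLin_apply] using key
  -- Lanczos is exact on monomials of degree < M
  have hexact : ∀ k : ℕ, k < M → (L ^ k) *ᵥ s = ns • (V *ᵥ ((H ^ k) *ᵥ e1)) := by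
    intro k
    induction k with
    | zero =>
      intro _
      rw [pow_zero, pow_zero, Matrix.one_mulVec, Matrix.one_mulVec, he1single,
        Matrix.mulVec_single_one]
      funext i
      have : V.col n1 i = s i / ns := hfirst i
      rw [Pi.smul_apply, this, smul_eq_mul, mul_div_cancel₀ _ (ne_of_gt hns)]
    | succ k ih =>
      intro hk1
      have hk : k < M := Nat.lt_of_succ_lt hk1
      have ihk := ih hk
      have step : (L ^ (k + 1)) *ᵥ s = ns • ((L * V) *ᵥ ((H ^ k) *ᵥ e1)) := by
        rw [pow_succ', ← Matrix.mulVec_mulVec, ihk, Matrix.mulVec_smul, Matrix.mulVec_mulVec]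
      have hmem : (L ^ (k + 1)) *ᵥ s
          ∈ Submodule.span ℝ (Set.range fun j : Fin M => Vᵀ j) := by
        rw [hspan]
        exact Submodule.subset_span ⟨⟨k + 1, hk1⟩, rfl⟩
      have hproj := hVVt _ hmem
      have hm : V * H = V * Vᵀ * (L * V) := by
        rw [hHdef]; simp only [Matrix.mul_assoc]
      calc (L ^ (k + 1)) *ᵥ s = (V * Vᵀ) *ᵥ ((L ^ (k + 1)) *ᵥ s) := hproj.symm
        _ = (V * Vᵀ) *ᵥ (ns • ((L * V) *ᵥ ((H ^ k) *ᵥ e1))) := by rw [step]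
        _ = ns • (V *ᵥ ((H ^ (k + 1)) *ᵥ e1)) := by
            rw [Matrix.mulVec_smul]
            congr 1
            simp only [Matrix.mulVec_mulVec]
            congr 1
            rw [pow_succ', hHdef]
            simp only [Matrix.mul_assoc]
  -- Lanczos is exact on polynomials of degree ≤ M - 1
  have hpoly : ∀ p : Polynomial ℝ, p.natDegree ≤ M - 1 →
      (U * Matrix.diagonal (fun i => p.eval (Λ i)) * Uᵀ) *ᵥ s
        = ns • (V *ᵥ ((W * Matrix.diagonal (fun i => p.eval (μ i)) * Wᵀ) *ᵥ e1)) := by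
    intro p hp
    rw [spectral_aeval U Λ hU p, spectral_aeval W μ hW p, ← hLdec, ← hHdec]
    rw [Polynomial.aeval_eq_sum_range (R := ℝ) (p := p) L,
      Polynomial.aeval_eq_sum_range (R := ℝ) (p := p) H,
      sum_mulVec', sum_mulVec', mulVec_sum', Finset.smul_sum]
    apply Finset.sum_congr rfl
    intro i hi
    have hiM : i < M := by
      have := Finset.mem_range.mp hi
      omega
    rw [smul_mulVec, smul_mulVec, Matrix.mulVec_smul, hexact i hiM, smul_comm]
  -- set up the sInf
  set E := { e : ℝ | ∃ p : Polynomial ℝ, p.natDegree ≤ M - 1 ∧ p.eval 0 = g 0 ∧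
      e = sSup ((fun z => |g z - p.eval z|) '' Set.Icc lam1 lammax) } with hE
  have hEne : E.Nonempty := by
    refine ⟨_, Polynomial.C (g 0), ?_, ?_, rfl⟩
    · simp
    · simp
  have hsubset : Set.Icc lam1 lammax ⊆ Set.Icc 0 lammax :=
    Set.Icc_subset_Icc (le_of_lt hlam1) le_rfl
  -- the main bound for each element of E
  have hbound : ∀ e ∈ E,
      euclNorm ((U * Matrix.diagonal (fun i => g (Λ i)) * Uᵀ) *ᵥ s
        - ns • (V *ᵥ ((W * Matrix.diagonal (fun i => g (μ i)) * Wᵀ) *ᵥ e1)))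
        ≤ 2 * ns * e := by
    rintro e ⟨p, hpdeg, hp0, rfl⟩
    set e' := sSup ((fun z => |g z - p.eval z|) '' Set.Icc lam1 lammax) with he'
    have hcont : ContinuousOn (fun z => |g z - p.eval z|) (Set.Icc lam1 lammax) :=
      ((hg.mono hsubset).sub (Polynomial.continuous p).continuousOn).abs
    have hbdd : BddAbove ((fun z => |g z - p.eval z|) '' Set.Icc lam1 lammax) :=
      (isCompact_Icc.image_of_continuousOn hcont).bddAbove
    have hmem1 : |g lam1 - p.eval lam1| ∈
        ((fun z => |g z - p.eval z|) '' Set.Icc lam1 lammax) :=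
      ⟨lam1, ⟨le_rfl, hlam⟩, rfl⟩
    have he0 : 0 ≤ e' := le_trans (abs_nonneg _) (le_csSup hbdd hmem1)
    have hle : ∀ z ∈ Set.Icc lam1 lammax, |g z - p.eval z| ≤ e' :=
      fun z hz => le_csSup hbdd ⟨z, hz, rfl⟩
    have hcΛ : ∀ i, |g (Λ i) - p.eval (Λ i)| ≤ e' := by
      intro i
      rcases hΛ i with h0 | hIcc
      · rw [Set.mem_singleton_iff.mp h0, hp0, sub_self, abs_zero]; exact he0
      · exact hle _ hIcc
    have hcμ : ∀ i, |g (μ i) - p.eval (μ i)| ≤ e' := by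
      intro i
      rcases hμ i with h0 | hIcc
      · rw [Set.mem_singleton_iff.mp h0, hp0, sub_self, abs_zero]; exact he0
      · exact hle _ hIcc
    -- split off the polynomial part
    have hsplitL : U * Matrix.diagonal (fun i => g (Λ i)) * Uᵀ
        = U * Matrix.diagonal (fun i => g (Λ i) - p.eval (Λ i)) * Uᵀ
          + U * Matrix.diagonal (fun i => p.eval (Λ i)) * Uᵀ := by
      have hd : (fun i => g (Λ i))
          = (fun i => (g (Λ i) - Polynomial.eval (Λ i) p) + Polynomial.eval (Λ i) p) := by
        funext i; simp
      rw [hd, ← Matrix.diagonal_add, Matrix.mul_add, Matrix.add_mul]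
    have hsplitR : W * Matrix.diagonal (fun i => g (μ i)) * Wᵀ
        = W * Matrix.diagonal (fun i => g (μ i) - p.eval (μ i)) * Wᵀ
          + W * Matrix.diagonal (fun i => p.eval (μ i)) * Wᵀ := by
      have hd : (fun i => g (μ i))
          = (fun i => (g (μ i) - Polynomial.eval (μ i) p) + Polynomial.eval (μ i) p) := by
        funext i; simp
      rw [hd, ← Matrix.diagonal_add, Matrix.mul_add, Matrix.add_mul]
    have hvec : (U * Matrix.diagonal (fun i => g (Λ i)) * Uᵀ) *ᵥ s
        - ns • (V *ᵥ ((W * Matrix.diagonal (fun i => g (μ i)) * Wᵀ) *ᵥ e1))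
        = (U * Matrix.diagonal (fun i => g (Λ i) - p.eval (Λ i)) * Uᵀ) *ᵥ s
          - ns • (V *ᵥ ((W * Matrix.diagonal (fun i => g (μ i) - p.eval (μ i)) * Wᵀ) *ᵥ e1)) := by
      rw [hsplitL, hsplitR, Matrix.add_mulVec, Matrix.add_mulVec, Matrix.mulVec_add,
        smul_add, hpoly p hpdeg]
      abel
    rw [hvec]
    have hUU : U * Uᵀ = 1 := mul_eq_one_comm.mp hU
    have hWW : W * Wᵀ = 1 := mul_eq_one_comm.mp hW
    have hUt : (Uᵀ)ᵀ * Uᵀ = 1 := by rw [Matrix.transpose_transpose]; exact hUU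
    have hWt : (Wᵀ)ᵀ * Wᵀ = 1 := by rw [Matrix.transpose_transpose]; exact hWW
    have hnormA : euclNorm ((U * Matrix.diagonal (fun i => g (Λ i) - p.eval (Λ i)) * Uᵀ) *ᵥ s)
        ≤ e' * ns := by
      rw [← Matrix.mulVec_mulVec, ← Matrix.mulVec_mulVec, euclNorm_mulVec U hU]
      calc euclNorm (Matrix.diagonal (fun i => g (Λ i) - p.eval (Λ i)) *ᵥ (Uᵀ *ᵥ s))
          ≤ e' * euclNorm (Uᵀ *ᵥ s) := euclNorm_diagonal_le he0 hcΛ _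
        _ = e' * ns := by rw [euclNorm_mulVec Uᵀ hUt]
    have hnorme1 : euclNorm e1 = 1 := by
      have hsum : ∑ j, e1 j ^ 2 = 1 := by
        have h2 : ∀ j, e1 j ^ 2 = if j = n1 then (1 : ℝ) else 0 := by
          intro j
          by_cases h : j = n1 <;> simp [he1_def, h]
        rw [Finset.sum_congr rfl fun j _ => h2 j]
        simp
      rw [euclNorm, hsum, Real.sqrt_one]
    have hnormB : euclNorm (ns • (V *ᵥ ((W * Matrix.diagonal (fun i => g (μ i) - p.eval (μ i)) * Wᵀ) *ᵥ e1)))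
        ≤ ns * e' := by
      rw [euclNorm_smul, abs_of_pos hns, euclNorm_mulVec V hV]
      apply mul_le_mul_of_nonneg_left _ (le_of_lt hns)
      rw [← Matrix.mulVec_mulVec, ← Matrix.mulVec_mulVec, euclNorm_mulVec W hW]
      calc euclNorm (Matrix.diagonal (fun i => g (μ i) - p.eval (μ i)) *ᵥ (Wᵀ *ᵥ e1))
          ≤ e' * euclNorm (Wᵀ *ᵥ e1) := euclNorm_diagonal_le he0 hcμ _
        _ = e' := by rw [euclNorm_mulVec Wᵀ hWt, hnorme1, mul_one]
    calc euclNorm ((U * Matrix.diagonal (fun i => g (Λ i) - p.eval (Λ i)) * Uᵀ) *ᵥ s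
          - ns • (V *ᵥ ((W * Matrix.diagonal (fun i => g (μ i) - p.eval (μ i)) * Wᵀ) *ᵥ e1)))
        ≤ euclNorm ((U * Matrix.diagonal (fun i => g (Λ i) - p.eval (Λ i)) * Uᵀ) *ᵥ s)
          + euclNorm (ns • (V *ᵥ ((W * Matrix.diagonal (fun i => g (μ i) - p.eval (μ i)) * Wᵀ) *ᵥ e1))) :=
          euclNorm_sub_le _ _
      _ ≤ e' * ns + ns * e' := add_le_add hnormA hnormB
      _ = 2 * ns * e' := by ring
  -- conclude via the infimum
  set lhs := euclNorm ((U * Matrix.diagonal (fun i => g (Λ i)) * Uᵀ) *ᵥ s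
      - ns • (V *ᵥ ((W * Matrix.diagonal (fun i => g (μ i)) * Wᵀ) *ᵥ e1))) with hlhs
  have hmul : 0 < 2 * ns := by positivity
  have hdiv : lhs / (2 * ns) ≤ sInf E :=
    le_csInf hEne fun e he => (div_le_iff₀ hmul).mpr ((hbound e he).trans_eq (mul_comm _ _))
  calc lhs = 2 * ns * (lhs / (2 * ns)) := by field_simp
    _ ≤ 2 * ns * sInf E := mul_le_mul_of_nonneg_left hdiv (le_of_lt hmul)
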